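/- arXiv:2512.05151 — 2 statements merged into one kernel-verified Lean document; each statement's English description precedes it below -/
import Mathlib

section
/- No-cloning theorem: there is no unitary U on ℂ² ⊗ ℂ² such that U(ψ ⊗ e₀) = ψ ⊗ ψ for all unit vectors ψ ∈ ℂ², where e₀ is a fixed unit vector. -/
/-!
A unitary preserves inner products, and `⟪ψ ⊗ e, φ ⊗ e⟫ = ⟪ψ, φ⟫ ⟪e, e⟫` while
`⟪ψ ⊗ ψ, φ ⊗ φ⟫ = ⟪ψ, φ⟫²`. Taking `φ = ψ` forces `⟪e, e⟫ = 1`, so the overlap `s` of any two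
cloned unit vectors satisfies `s = s²`; but `(1, 0)` and `(3/5, 4/5)` have overlap `3/5`.
-/

open Matrix

/-- Tensor product of two qubit vectors, as a vector on `Fin 2 × Fin 2`. -/
def tensorVec (v w : Fin 2 → ℂ) : Fin 2 × Fin 2 → ℂ := fun p => v p.1 * w p.2

theorem Matrix.star_mulVec_dotProduct_mulVec {n R : Type*} [Fintype n] [DecidableEq n]
    [CommSemiring R] [StarRing R] {U : Matrix n n R} (hU : Uᴴ * U = 1) (v w : n → R) :
    star (U *ᵥ v) ⬝ᵥ (U *ᵥ w) = star v ⬝ᵥ w := by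
  rw [star_mulVec, dotProduct_mulVec, vecMul_vecMul, hU, vecMul_one]

theorem star_tensorVec_dotProduct_tensorVec (v w v' w' : Fin 2 → ℂ) :
    star (tensorVec v w) ⬝ᵥ tensorVec v' w' = (star v ⬝ᵥ v') * (star w ⬝ᵥ w') := by
  simp only [dotProduct, Fintype.sum_prod_type, tensorVec, Pi.star_apply, star_mul',
    Finset.sum_mul_sum]
  exact Finset.sum_congr rfl fun i _ => Finset.sum_congr rfl fun j _ => by ring

theorem dotProduct_mul_eq_sq_of_clones {U : Matrix (Fin 2 × Fin 2) (Fin 2 × Fin 2) ℂ}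
    (hU : Uᴴ * U = 1) {e ψ φ : Fin 2 → ℂ} (hψ : U *ᵥ tensorVec ψ e = tensorVec ψ ψ)
    (hφ : U *ᵥ tensorVec φ e = tensorVec φ φ) :
    (star ψ ⬝ᵥ φ) * (star e ⬝ᵥ e) = (star ψ ⬝ᵥ φ) ^ 2 := by
  have h := star_mulVec_dotProduct_mulVec hU (tensorVec ψ e) (tensorVec φ e)
  rw [hψ, hφ, star_tensorVec_dotProduct_tensorVec, star_tensorVec_dotProduct_tensorVec] at h
  rw [← h, sq]

theorem no_cloning_general (e₀ : Fin 2 → ℂ) :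
    ¬ ∃ U : Matrix (Fin 2 × Fin 2) (Fin 2 × Fin 2) ℂ,
        Uᴴ * U = 1 ∧
        ∀ ψ : Fin 2 → ℂ, (∑ i, ‖ψ i‖ ^ 2 = 1) →
          U.mulVec (tensorVec ψ e₀) = tensorVec ψ ψ := by
  rintro ⟨U, hU, hclone⟩
  have hψ := hclone ![1, 0] (by simp)
  have hφ := hclone ![3 / 5, 4 / 5] (by simp [Fin.sum_univ_two]; norm_num)
  have hnorm := dotProduct_mul_eq_sq_of_clones hU hψ hψ
  have hoverlap := dotProduct_mul_eq_sq_of_clones hU hψ hφ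
  norm_num [dotProduct, Fin.sum_univ_two] at hnorm hoverlap
  norm_num [hnorm] at hoverlap

/-- No-cloning theorem. -/
theorem no_cloning (e₀ : Fin 2 → ℂ) (he₀ : ∑ i, ‖e₀ i‖ ^ 2 = 1) :
    ¬ ∃ U : Matrix (Fin 2 × Fin 2) (Fin 2 × Fin 2) ℂ,
        Uᴴ * U = 1 ∧
        ∀ ψ : Fin 2 → ℂ, (∑ i, ‖ψ i‖ ^ 2 = 1) →
          U.mulVec (tensorVec ψ e₀) = tensorVec ψ ψ :=
  no_cloning_general e₀
end

section
/- For the DQC1 circuit, the expectation of σ_z on the clean qubit equals the normalized real trace of the unitary: if the n-qubit input is ρ = |0⟩⟨0| ⊗ (I/2^{n-1}) and we apply (H⊗I)·CU·(H⊗I) where CU = |0⟩⟨0|⊗I + |1⟩⟨1|⊗U for a unitary U on 2^{n-1} dimensions, then the expectation of σ_z ⊗ I in the output state equals Re(Tr U)/2^{n-1}. -/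
open Matrix Kronecker

/-! Conjugating by the self-adjoint Hadamard layer `H ⊗ I` moves it onto the
observable and the state: `H σ_z H = σ_x` and `H |0⟩⟨0| H = |+⟩⟨+|`. The controlled-`U` sends
`|+⟩⟨+| ⊗ S` to a block matrix with off-diagonal blocks `U S / 2` and `S U† / 2`, and `σ_x ⊗ I`
reads off exactly the traces of these two blocks. With `S = I / 2^(n-1)` this is
`(Tr U + conj (Tr U)) / 2^n = Re (Tr U) / 2^(n-1)`. -/

noncomputable def hadamard2 : Matrix (Fin 2) (Fin 2) ℂ :=
  ((1 / Real.sqrt 2 : ℝ) : ℂ) • !![1, 1; 1, -1]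

noncomputable def pauliZ : Matrix (Fin 2) (Fin 2) ℂ := !![1, 0; 0, -1]

lemma conjTranspose_hadamard2 : hadamard2ᴴ = hadamard2 := by
  rw [hadamard2, conjTranspose_smul]
  congr 1
  · simp
  · ext i j; fin_cases i <;> fin_cases j <;> simp

lemma hadamard2_mul_mul_hadamard2_of {M N : Matrix (Fin 2) (Fin 2) ℂ}
    (h : !![1, 1; 1, -1] * M * !![1, 1; 1, -1] = (2 : ℂ) • N) :
    hadamard2 * M * hadamard2 = N := by
  have hsq : ((1 / Real.sqrt 2 : ℝ) : ℂ) * ((1 / Real.sqrt 2 : ℝ) : ℂ) = 1 / 2 := by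
    rw [← Complex.ofReal_mul, div_mul_div_comm, one_mul, Real.mul_self_sqrt (by norm_num)]
    norm_num
  rw [hadamard2, smul_mul_assoc, smul_mul_assoc, mul_smul_comm, smul_smul, hsq, h, smul_smul]
  norm_num

lemma hadamard2_mul_pauliZ_mul_hadamard2 :
    hadamard2 * pauliZ * hadamard2 = !![0, 1; 1, 0] := by
  apply hadamard2_mul_mul_hadamard2_of
  ext i j; fin_cases i <;> fin_cases j <;> simp [pauliZ] <;> norm_num

lemma hadamard2_mul_proj_zero_mul_hadamard2 :
    hadamard2 * !![1, 0; 0, 0] * hadamard2 = (1 / 2 : ℂ) • !![1, 1; 1, 1] := by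
  apply hadamard2_mul_mul_hadamard2_of
  ext i j; fin_cases i <;> fin_cases j <;> simp

lemma trace_mul_conj_sandwich {ι R : Type*} [Fintype ι] [CommRing R] [StarRing R]
    {A C ρ W : Matrix ι ι R} (hW : Wᴴ = W) :
    (A * ((W * C * W) * ρ * (W * C * W)ᴴ)).trace
      = ((W * A * W) * C * (W * ρ * W) * Cᴴ).trace := by
  simp only [conjTranspose_mul, hW, ← Matrix.mul_assoc]
  rw [trace_mul_comm]
  simp only [← Matrix.mul_assoc]

lemma trace_pauliX_kronecker_mul_controlled_conj {ι R : Type*} [Fintype ι] [DecidableEq ι]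
    [CommRing R] [StarRing R] (U S : Matrix ι ι R) :
    let CU := (!![1, 0; 0, 0] : Matrix (Fin 2) (Fin 2) R) ⊗ₖ (1 : Matrix ι ι R) +
        (!![0, 0; 0, 1] : Matrix (Fin 2) (Fin 2) R) ⊗ₖ U
    ((!![0, 1; 1, 0] ⊗ₖ 1) * CU * (!![1, 1; 1, 1] ⊗ₖ S) * CUᴴ).trace
      = (U * S).trace + (S * Uᴴ).trace := by
  intro CU
  have hP₀ : (!![1, 0; 0, 0] : Matrix (Fin 2) (Fin 2) R)ᴴ = !![1, 0; 0, 0] := by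
    ext i j; fin_cases i <;> fin_cases j <;> simp
  have hP₁ : (!![0, 0; 0, 1] : Matrix (Fin 2) (Fin 2) R)ᴴ = !![0, 0; 0, 1] := by
    ext i j; fin_cases i <;> fin_cases j <;> simp
  simp only [CU, conjTranspose_add, conjTranspose_kronecker, hP₀, hP₁, conjTranspose_one, add_mul,
    mul_add, ← mul_kronecker_mul, trace_add, trace_kronecker, Matrix.one_mul, Matrix.mul_one]
  simp [Matrix.trace_fin_two]

theorem dqc1_trace_estimation_general (n : ℕ)
    (U : Matrix (Fin (2 ^ (n - 1))) (Fin (2 ^ (n - 1))) ℂ) :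
    let d : ℕ := 2 ^ (n - 1)
    let I : Matrix (Fin d) (Fin d) ℂ := 1
    let CU : Matrix (Fin 2 × Fin d) (Fin 2 × Fin d) ℂ :=
      (!![1, 0; 0, 0] : Matrix (Fin 2) (Fin 2) ℂ) ⊗ₖ I +
        (!![0, 0; 0, 1] : Matrix (Fin 2) (Fin 2) ℂ) ⊗ₖ U
    let V : Matrix (Fin 2 × Fin d) (Fin 2 × Fin d) ℂ :=
      (hadamard2 ⊗ₖ I) * CU * (hadamard2 ⊗ₖ I)
    let ρ : Matrix (Fin 2 × Fin d) (Fin 2 × Fin d) ℂ :=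
      (!![1, 0; 0, 0] : Matrix (Fin 2) (Fin 2) ℂ) ⊗ₖ (((1 : ℂ) / (2 ^ (n - 1))) • I)
    ((pauliZ ⊗ₖ I) * (V * ρ * Vᴴ)).trace = ((U.trace.re : ℝ) : ℂ) / (2 ^ (n - 1)) := by
  intro d I CU V ρ
  have hW : (hadamard2 ⊗ₖ I)ᴴ = hadamard2 ⊗ₖ I := by
    rw [conjTranspose_kronecker, conjTranspose_hadamard2, conjTranspose_one]
  have hZ : (hadamard2 ⊗ₖ I) * (pauliZ ⊗ₖ I) * (hadamard2 ⊗ₖ I) = !![0, 1; 1, 0] ⊗ₖ I := by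
    simp only [← mul_kronecker_mul, hadamard2_mul_pauliZ_mul_hadamard2, I, Matrix.mul_one]
  have hρ : (hadamard2 ⊗ₖ I) * ρ * (hadamard2 ⊗ₖ I)
      = !![1, 1; 1, 1] ⊗ₖ ((1 / 2 ^ (n - 1) * (1 / 2) : ℂ) • I) := by
    simp only [ρ, I, kronecker_smul, smul_kronecker, Matrix.mul_smul, Matrix.smul_mul,
      ← mul_kronecker_mul, Matrix.mul_one, hadamard2_mul_proj_zero_mul_hadamard2, smul_smul]
  rw [trace_mul_conj_sandwich hW, hZ, hρ, trace_pauliX_kronecker_mul_controlled_conj]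
  simp only [I, Matrix.mul_smul, Matrix.smul_mul, Matrix.mul_one, Matrix.one_mul, trace_smul,
    trace_conjTranspose, smul_eq_mul, Complex.star_def]
  have hre : U.trace + (starRingEnd ℂ) U.trace = 2 * (U.trace.re : ℂ) := by
    exact_mod_cast Complex.add_conj U.trace
  linear_combination (1 / 2 ^ (n - 1) * (1 / 2) : ℂ) * hre

/-- DQC1: the expectation of `σ_z` on the clean qubit is the normalized real trace. -/
theorem dqc1_trace_estimation (n : ℕ) (hn : 0 < n)
    (U : Matrix (Fin (2 ^ (n - 1))) (Fin (2 ^ (n - 1))) ℂ)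
    (hU : U ∈ Matrix.unitaryGroup (Fin (2 ^ (n - 1))) ℂ) :
    let d : ℕ := 2 ^ (n - 1)
    let I : Matrix (Fin d) (Fin d) ℂ := 1
    let CU : Matrix (Fin 2 × Fin d) (Fin 2 × Fin d) ℂ :=
      (!![1, 0; 0, 0] : Matrix (Fin 2) (Fin 2) ℂ) ⊗ₖ I +
        (!![0, 0; 0, 1] : Matrix (Fin 2) (Fin 2) ℂ) ⊗ₖ U
    let V : Matrix (Fin 2 × Fin d) (Fin 2 × Fin d) ℂ :=
      (hadamard2 ⊗ₖ I) * CU * (hadamard2 ⊗ₖ I)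
    let ρ : Matrix (Fin 2 × Fin d) (Fin 2 × Fin d) ℂ :=
      (!![1, 0; 0, 0] : Matrix (Fin 2) (Fin 2) ℂ) ⊗ₖ (((1 : ℂ) / (2 ^ (n - 1))) • I)
    ((pauliZ ⊗ₖ I) * (V * ρ * Vᴴ)).trace = ((U.trace.re : ℝ) : ℂ) / (2 ^ (n - 1)) :=
  dqc1_trace_estimation_general n U
end
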